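/- Fix a widths vector n = (n₀, …, n_L) with reduced widths vector n^red, and radial rescaling activations ρ_i = h_i^{(n_i)} with restrictions ρ^red_i = h_i^{(n^red_i)}. Let (W, b) ∈ Param(n) belong to the interpolating subspace Param^int(n), i.e., for each i the last n_i − n^red_i entries of b_i vanish and the bottom-left (n_i − n^red_i) × n^red_{i−1} block of W_i vanishes. Let (V, c) ∈ Param(n^red) be obtained by extracting from each b_i its first n^red_i entries and from each W_i its top-left n^red_i × n^red_{i−1} block. Then the feedforward function of the radial neural network (W, b, ρ) equals the feedforward function of the radial neural network (V, c, ρ^red). -/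

import Mathlib

open scoped Classical
open Metric Set

noncomputable section

abbrev Euc (n : ℕ) := EuclideanSpace ℝ (Fin n)

def mulVecE {m n : ℕ} (W : Matrix (Fin m) (Fin n) ℝ) (v : Euc n) : Euc m :=
  WithLp.toLp 2 (fun j => ∑ k, W j k * v k)

/-- The radial rescaling function h⁽ᵏ⁾ : ℝᵏ → ℝᵏ associated to h : ℝ → ℝ,
v ↦ (h ‖v‖ / ‖v‖) • v for v ≠ 0, and 0 ↦ 0. -/
def radialRescale {n : ℕ} (h : ℝ → ℝ) (v : Euc n) : Euc n :=
  if v = 0 then 0 else (h ‖v‖ / ‖v‖) • v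

/-- The partial feedforward functions of a fully connected network with widths
width 0, width 1, …: F₀ = id and F_{i+1}(x) = ρᵢ(Wᵢ Fᵢ(x) + bᵢ).
(Activation ρ i, weights W i and biases b i belong to layer i+1.) -/
def feedforward (width : ℕ → ℕ)
    (W : ∀ i : ℕ, Matrix (Fin (width (i+1))) (Fin (width i)) ℝ)
    (b : ∀ i : ℕ, Euc (width (i+1)))
    (ρ : ∀ i : ℕ, Euc (width (i+1)) → Euc (width (i+1))) :
    (i : ℕ) → Euc (width 0) → Euc (width i)
  | 0 => fun x => x
  | (i+1) => fun x => ρ i (mulVecE (W i) (feedforward width W b ρ i x) + b i)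

/-- The reduced widths vector: nʳᵉᵈ₀ = n₀, nʳᵉᵈᵢ = min(nᵢ, nʳᵉᵈ_{i−1} + 1) for
0 < i < L, and nʳᵉᵈ_L = n_L. -/
def reducedWidth (width : ℕ → ℕ) (L : ℕ) : ℕ → ℕ
  | 0 => width 0
  | (i+1) => if i + 1 < L then min (width (i+1)) (reducedWidth width L i + 1) else width (i+1)

lemma reducedWidth_le (width : ℕ → ℕ) (L : ℕ) (i : ℕ) :
    reducedWidth width L i ≤ width i := by
  cases i with
  | zero => simp [reducedWidth]
  | succ i =>
    rw [reducedWidth]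
    split
    · exact min_le_left _ _
    · exact le_rfl

/-- The standard inclusion ℝᵏ ↪ ℝˡ into the first k coordinates. -/
def incl (k l : ℕ) (v : Euc k) : Euc l :=
  WithLp.toLp 2 (fun j => if h : (j : ℕ) < k then v ⟨j, h⟩ else 0)

/-! On the interpolating subspace each layer maps the coordinate subspace `ℝ^{nʳᵉᵈ_{i-1}}` into
`ℝ^{nʳᵉᵈ_i}`, acting there by the extracted parameters `(Vᵢ, cᵢ)`: the zero block of `Wᵢ` and the
zero tail of `bᵢ` kill everything outside. Radial rescaling commutes with isometric linear
embeddings, so the inclusions intertwine the layers of the two networks, and induction on the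
depth gives the claim. -/

section Inclusion

variable {k l : ℕ}

lemma incl_self (v : Euc k) : incl k k v = v := by
  ext j
  simp [incl]

lemma incl_castLE (hkl : k ≤ l) (v : Euc k) (j : Fin k) :
    incl k l v (Fin.castLE hkl j) = v j := by
  simp [incl, j.isLt]

lemma incl_apply_of_le (v : Euc k) {j : Fin l} (hj : k ≤ j) : incl k l v j = 0 := by
  simp [incl, not_lt.2 hj]

lemma sum_comp_incl (hkl : k ≤ l) (f : Fin l → ℝ → ℝ) (hf : ∀ j, f j 0 = 0) (v : Euc k) :
    ∑ j, f j (incl k l v j) = ∑ j, f (Fin.castLE hkl j) (v j) := by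
  refine (Fintype.sum_of_injective _ (Fin.castLE_injective hkl) _ _ (fun j hj => ?_)
    (fun j => by rw [incl_castLE])).symm
  have hkj : k ≤ j := not_lt.1 fun hjk => hj ⟨⟨j, hjk⟩, rfl⟩
  rw [incl_apply_of_le v hkj, hf]

def inclₗᵢ (hkl : k ≤ l) : Euc k →ₗᵢ[ℝ] Euc l where
  toFun := incl k l
  map_add' v w := by
    ext j
    simp only [incl, PiLp.add_apply]
    split <;> simp
  map_smul' c v := by
    ext j
    simp only [incl, PiLp.smul_apply, smul_eq_mul, RingHom.id_apply]
    split <;> simp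
  norm_map' v := by
    simp only [EuclideanSpace.norm_eq, LinearMap.coe_mk, AddHom.coe_mk]
    rw [sum_comp_incl hkl (fun _ x => ‖x‖ ^ 2) (by simp)]

end Inclusion

lemma radialRescale_map {k l : ℕ} (f : Euc k →ₗᵢ[ℝ] Euc l) (g : ℝ → ℝ) (v : Euc k) :
    radialRescale g (f v) = f (radialRescale g v) := by
  by_cases hv : v = 0
  · simp [radialRescale, hv]
  · have hfv : f v ≠ 0 := (map_ne_zero_iff f f.injective).2 hv
    simp [radialRescale, hv, hfv, map_smul]

lemma mulVecE_incl_add {m n m' n' : ℕ} (hm : m' ≤ m) (hn : n' ≤ n)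
    (W : Matrix (Fin m) (Fin n) ℝ) (b : Euc m)
    (hW : ∀ (j : Fin m) (k : Fin n), m' ≤ (j : ℕ) → (k : ℕ) < n' → W j k = 0)
    (hb : ∀ j : Fin m, m' ≤ (j : ℕ) → b j = 0) (v : Euc n') :
    mulVecE W (incl n' n v) + b
      = incl m' m (mulVecE (W.submatrix (Fin.castLE hm) (Fin.castLE hn)) v
          + WithLp.toLp 2 (b ∘ Fin.castLE hm)) := by
  ext j
  by_cases hj : (j : ℕ) < m'
  · rw [show j = Fin.castLE hm ⟨j, hj⟩ from rfl]
    simp only [PiLp.add_apply, incl_castLE, mulVecE]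
    rw [sum_comp_incl hn (fun k x => W _ k * x) (fun _ => mul_zero _)]
    rfl
  · have hj : m' ≤ (j : ℕ) := not_lt.1 hj
    rw [incl_apply_of_le _ hj, PiLp.add_apply, hb j hj, add_zero, mulVecE, PiLp.toLp_apply]
    refine Finset.sum_eq_zero fun k _ => ?_
    by_cases hk : (k : ℕ) < n'
    · rw [hW j k hj hk, zero_mul]
    · rw [incl_apply_of_le v (not_lt.1 hk), mul_zero]

lemma feedforward_intertwine {n r : ℕ → ℕ} {L : ℕ}
    {W : ∀ i : ℕ, Matrix (Fin (n (i+1))) (Fin (n i)) ℝ} {b : ∀ i : ℕ, Euc (n (i+1))}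
    {ρ : ∀ i : ℕ, Euc (n (i+1)) → Euc (n (i+1))}
    {V : ∀ i : ℕ, Matrix (Fin (r (i+1))) (Fin (r i)) ℝ} {c : ∀ i : ℕ, Euc (r (i+1))}
    {σ : ∀ i : ℕ, Euc (r (i+1)) → Euc (r (i+1))}
    (φ : ∀ i, Euc (r i) → Euc (n i))
    (hφ : ∀ i < L, ∀ v, ρ i (mulVecE (W i) (φ i v) + b i)
      = φ (i+1) (σ i (mulVecE (V i) v + c i)))
    (x : Euc (r 0)) :
    ∀ i ≤ L, feedforward n W b ρ i (φ 0 x) = φ i (feedforward r V c σ i x)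
  | 0, _ => rfl
  | i+1, hi => by
    simp only [feedforward, feedforward_intertwine φ hφ x i (by omega), hφ i (by omega)]

/-- Suppose the parameters (W, b) lie in the interpolating subspace
Paramⁱⁿᵗ(n): for each layer, the last nᵢ − nʳᵉᵈᵢ entries of bᵢ vanish and the
bottom-left (nᵢ − nʳᵉᵈᵢ) × nʳᵉᵈ_{i−1} block of Wᵢ vanishes.  Let (V, c) be obtained
by extracting the first nʳᵉᵈᵢ entries of bᵢ and the top-left nʳᵉᵈᵢ × nʳᵉᵈ_{i−1}
block of Wᵢ.  Then the radial neural networks (W, b, ρ) and (V, c, ρʳᵉᵈ) have the same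
feedforward function (nʳᵉᵈ_L = n_L, identified via the standard inclusion). -/
theorem interpolating_feedforward_eq (L : ℕ) (width : ℕ → ℕ)
    (W : ∀ i : ℕ, Matrix (Fin (width (i+1))) (Fin (width i)) ℝ)
    (b : ∀ i : ℕ, Euc (width (i+1)))
    (h : ℕ → ℝ → ℝ)
    (hW : ∀ i < L, ∀ (j : Fin (width (i+1))) (k : Fin (width i)),
      reducedWidth width L (i+1) ≤ (j : ℕ) → (k : ℕ) < reducedWidth width L i →
        W i j k = 0)
    (hb : ∀ i < L, ∀ j : Fin (width (i+1)),
      reducedWidth width L (i+1) ≤ (j : ℕ) → b i j = 0) :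
    ∀ x : Euc (width 0),
      feedforward width W b (fun i => radialRescale (h i)) L x
        = incl (reducedWidth width L L) (width L)
            (feedforward (reducedWidth width L)
              (fun i => fun j k =>
                W i (Fin.castLE (reducedWidth_le width L (i+1)) j)
                    (Fin.castLE (reducedWidth_le width L i) k))
              (fun i => WithLp.toLp 2 (fun j => b i (Fin.castLE (reducedWidth_le width L (i+1)) j)))
              (fun i => radialRescale (h i)) L x) := by
  intro x
  nth_rewrite 1 [← show incl (reducedWidth width L 0) (width 0) x = x from incl_self x]
  refine feedforward_intertwine (fun i => incl (reducedWidth width L i) (width i)) (fun i hi v => ?_) x L le_rfl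
  rw [mulVecE_incl_add _ _ _ _ (hW i hi) (hb i hi)]
  exact radialRescale_map (inclₗᵢ (reducedWidth_le width L (i+1))) (h i) _

end
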